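/- Let G be a finite simple graph on n ≥ 2 vertices and ε > 0. Consider the phased peeling process: the current graph is initially G, and in phase t = 0, 1, 2, … the process performs ⌈log_{(2+ε)/2}(n)⌉ rounds, each round simultaneously removing from the current graph all vertices whose current degree is at most (2+ε)(1+ε)^t; the process stops when the graph is empty. Then every vertex removed during phase t has coreness (in G) at most (2+ε)(1+ε)^t, and for t ≥ 1 every vertex removed during phase t has coreness strictly greater than (1+ε)^{t−1}. In particular, assigning to each vertex removed in phase t the estimate (1+ε)^{max(t−1,0)} yields, for every vertex of coreness at least 1, an estimate ĉ(v) with ĉ(v) ≤ k(v) ≤ (2+ε)(1+ε)²·ĉ(v). -/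
import Mathlib


open scoped Classical

/-- The coreness of `v`: the largest `k` such that `v` belongs to an (induced) subgraph of `G`
of minimum degree at least `k`. -/
noncomputable def coreness {V : Type} [Fintype V] [DecidableEq V] (G : SimpleGraph V)
    [DecidableRel G.Adj] (v : V) : ℕ :=
  sSup {k : ℕ | ∃ s : Finset V, v ∈ s ∧ ∀ u ∈ s, k ≤ (s.filter (G.Adj u)).card}

/-- One round of peeling with threshold `τ`: from the current vertex set `S`, simultaneously
remove all vertices whose degree in the subgraph induced by `S` is at most `τ`. -/
noncomputable def peelStep {V : Type} [Fintype V] (G : SimpleGraph V) (τ : ℝ)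
    (S : Finset V) : Finset V :=
  S.filter (fun v => τ < ((S.filter (fun w => G.Adj v w)).card : ℝ))

/-- `phaseSet G ε R t` is the set of vertices remaining at the start of phase `t` of the phased
peeling process: in phase `t` the process performs `R` rounds of peeling with threshold
`(2+ε)(1+ε)^t`. -/
noncomputable def phaseSet {V : Type} [Fintype V] (G : SimpleGraph V) (ε : ℝ) (R : ℕ) :
    ℕ → Finset V
  | 0 => Finset.univ
  | t + 1 => (peelStep G ((2 + ε) * (1 + ε) ^ t))^[R] (phaseSet G ε R t)

section Aux
set_option linter.unusedSectionVars false
variable {V : Type} [Fintype V] [DecidableEq V] (G : SimpleGraph V) [DecidableRel G.Adj]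

lemma coreness_bddAbove (v : V) :
    BddAbove {k : ℕ | ∃ s : Finset V, v ∈ s ∧ ∀ u ∈ s, k ≤ (s.filter (G.Adj u)).card} := by
  refine ⟨Fintype.card V, ?_⟩
  rintro k ⟨s, hv, h⟩
  exact (h v hv).trans ((Finset.card_filter_le _ _).trans (Finset.card_le_univ s))

lemma le_coreness {v : V} {k : ℕ} {s : Finset V} (hv : v ∈ s)
    (h : ∀ u ∈ s, k ≤ (s.filter (G.Adj u)).card) : k ≤ coreness G v :=
  le_csSup (coreness_bddAbove G v) ⟨s, hv, h⟩

lemma coreness_spec (v : V) :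
    ∃ s : Finset V, v ∈ s ∧ ∀ u ∈ s, coreness G v ≤ (s.filter (G.Adj u)).card := by
  have hne : {k : ℕ | ∃ s : Finset V, v ∈ s ∧ ∀ u ∈ s, k ≤ (s.filter (G.Adj u)).card}.Nonempty :=
    ⟨0, {v}, Finset.mem_singleton_self v, fun _ _ => Nat.zero_le _⟩
  exact Nat.sSup_mem hne (coreness_bddAbove G v)

lemma core_min_degree (k : ℕ) (u : V) (hu : k + 1 ≤ coreness G u) :
    k + 1 ≤ ((Finset.univ.filter (fun w => k + 1 ≤ coreness G w)).filter (G.Adj u)).card := by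
  obtain ⟨s, hus, hs⟩ := coreness_spec G u
  have hsub : s ⊆ Finset.univ.filter (fun w => k + 1 ≤ coreness G w) := by
    intro w hw
    simp only [Finset.mem_filter, Finset.mem_univ, true_and]
    exact hu.trans (le_coreness G hw hs)
  calc k + 1 ≤ coreness G u := hu
    _ ≤ (s.filter (G.Adj u)).card := hs u hus
    _ ≤ _ := Finset.card_le_card (Finset.filter_subset_filter _ hsub)

lemma keycount (k : ℕ) : ∀ s : Finset V, (∀ v ∈ s, coreness G v ≤ k) →
    (∑ v ∈ s, (s.filter (G.Adj v)).card)
      + 2 * ∑ v ∈ s, ((Finset.univ.filter (fun w => k + 1 ≤ coreness G w)).filter (G.Adj v)).card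
      ≤ 2 * k * s.card := by
  intro s
  induction s using Finset.strongInductionOn with
  | _ s ih =>
  intro hs
  rcases s.eq_empty_or_nonempty with rfl | hne
  · simp
  set C := Finset.univ.filter (fun w => k + 1 ≤ coreness G w) with hCdef
  have hdisj : Disjoint s C := by
    rw [Finset.disjoint_left]
    intro x hx hxC
    have h1 := hs x hx
    have h2 : k + 1 ≤ coreness G x := (Finset.mem_filter.mp hxC).2
    omega
  have hlow : ∃ v ∈ s, (s.filter (G.Adj v)).card + (C.filter (G.Adj v)).card ≤ k := by
    by_contra hcon
    push_neg at hcon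
    have hmind : ∀ w ∈ s ∪ C, k + 1 ≤ ((s ∪ C).filter (G.Adj w)).card := by
      intro w hw
      rcases Finset.mem_union.mp hw with hw | hw
      · have h1 := hcon w hw
        have h2 : (s.filter (G.Adj w)).card + (C.filter (G.Adj w)).card
            = ((s ∪ C).filter (G.Adj w)).card := by
          rw [Finset.filter_union,
            Finset.card_union_of_disjoint (Finset.disjoint_filter_filter hdisj)]
        omega
      · exact (core_min_degree G k w (Finset.mem_filter.mp hw).2).trans
          (Finset.card_le_card (Finset.filter_subset_filter _ Finset.subset_union_right))
    obtain ⟨v0, hv0⟩ := hne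
    have h3 := le_coreness G (Finset.mem_union_left C hv0) hmind
    have h4 := hs v0 hv0
    omega
  obtain ⟨v, hv, hlv⟩ := hlow
  set s' := s.erase v with hs'def
  have hvs' : v ∉ s' := Finset.notMem_erase v s
  have hdeg_v : s.filter (G.Adj v) = s'.filter (G.Adj v) := by
    rw [hs'def, Finset.filter_erase, Finset.erase_eq_of_notMem (by simp [G.irrefl])]
  have hdeg_w : ∀ w ∈ s', (s.filter (G.Adj w)).card
      = (s'.filter (G.Adj w)).card + if G.Adj v w then 1 else 0 := by
    intro w hw
    have hvw : s = insert v s' := (Finset.insert_erase hv).symm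
    rw [hvw, Finset.filter_insert]
    by_cases h : G.Adj w v
    · rw [if_pos h,
        Finset.card_insert_of_notMem (fun hc => hvs' (Finset.mem_of_mem_filter v hc)),
        if_pos h.symm]
    · rw [if_neg h, if_neg (fun h' => h h'.symm), add_zero]
  have e1 : ∑ w ∈ s, (s.filter (G.Adj w)).card
      = (s'.filter (G.Adj v)).card + ∑ w ∈ s', (s.filter (G.Adj w)).card := by
    rw [← Finset.add_sum_erase s _ hv, hdeg_v, hs'def]
  have e2 : ∑ w ∈ s', (s.filter (G.Adj w)).card
      = (∑ w ∈ s', (s'.filter (G.Adj w)).card) + (s'.filter (G.Adj v)).card := by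
    rw [Finset.sum_congr rfl hdeg_w, Finset.sum_add_distrib, Finset.card_filter]
  have e3 : ∑ w ∈ s, (C.filter (G.Adj w)).card
      = (C.filter (G.Adj v)).card + ∑ w ∈ s', (C.filter (G.Adj w)).card :=
    (Finset.add_sum_erase s _ hv).symm
  have hdvc : (s.filter (G.Adj v)).card = (s'.filter (G.Adj v)).card := by rw [hdeg_v]
  have hih := ih s' (Finset.erase_ssubset hv) (fun w hw => hs w (Finset.mem_of_mem_erase hw))
  have hcard : s'.card = s.card - 1 := Finset.card_erase_of_mem hv
  have hpos : 1 ≤ s.card := Finset.card_pos.mpr ⟨v, hv⟩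
  have hcards : s.card = s'.card + 1 := by omega
  have hexp : 2 * k * s.card = 2 * k * s'.card + 2 * k := by rw [hcards]; ring
  omega

lemma mem_peelStep (τ : ℝ) (S : Finset V) (v : V) :
    v ∈ peelStep G τ S ↔ v ∈ S ∧ τ < ((S.filter (fun w => G.Adj v w)).card : ℝ) := by
  have hfc : ∀ (s : Finset V) (u : V),
      Finset.filter (fun w => G.Adj u w)
        (s := s) = @Finset.filter V (fun w => G.Adj u w) (fun a => Classical.propDecidable _) s :=
    fun s u => (Finset.filter_congr_decidable s (fun w => G.Adj u w) _).symm
  rw [peelStep, Finset.mem_filter, hfc]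

lemma peelStep_subset (τ : ℝ) (S : Finset V) : peelStep G τ S ⊆ S := Finset.filter_subset _ _

lemma iterate_peel_subset (τ : ℝ) (m : ℕ) (S : Finset V) : (peelStep G τ)^[m] S ⊆ S := by
  induction m with
  | zero => simp
  | succ m ih =>
    rw [Function.iterate_succ_apply']
    exact (peelStep_subset G τ _).trans ih

lemma subset_peelStep (τ : ℝ) (c : ℕ) (s S : Finset V) (hsS : s ⊆ S)
    (hτ : τ < (c : ℝ)) (hs : ∀ u ∈ s, c ≤ (s.filter (G.Adj u)).card) :
    s ⊆ peelStep G τ S := by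
  intro u hu
  refine (mem_peelStep G τ S u).mpr ⟨hsS hu, ?_⟩
  have h1 : (c : ℝ) ≤ ((s.filter (fun w => G.Adj u w)).card : ℝ) := by exact_mod_cast hs u hu
  have h2 : ((s.filter (fun w => G.Adj u w)).card : ℝ)
      ≤ ((S.filter (fun w => G.Adj u w)).card : ℝ) := by
    exact_mod_cast Finset.card_le_card (Finset.filter_subset_filter _ hsS)
  linarith

lemma subset_peel_iterate (τ : ℝ) (c : ℕ) (s : Finset V)
    (hτ : τ < (c : ℝ)) (hs : ∀ u ∈ s, c ≤ (s.filter (G.Adj u)).card) :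
    ∀ (m : ℕ) (S : Finset V), s ⊆ S → s ⊆ (peelStep G τ)^[m] S := by
  intro m
  induction m with
  | zero => intro S h; simpa using h
  | succ m ih =>
    intro S h
    rw [Function.iterate_succ_apply]
    exact ih _ (subset_peelStep G τ c s S h hτ hs)

lemma coreness_le_of_removed (ε : ℝ) (hε : 0 < ε) (R : ℕ) (t : ℕ) (v : V)
    (h2 : v ∉ phaseSet G ε R (t + 1)) :
    (coreness G v : ℝ) ≤ (2 + ε) * (1 + ε) ^ t := by
  by_contra hcon
  push_neg at hcon
  obtain ⟨s, hvs, hs⟩ := coreness_spec G v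
  have key : ∀ j, j ≤ t + 1 → s ⊆ phaseSet G ε R j := by
    intro j
    induction j with
    | zero => exact fun _ x _ => Finset.mem_univ x
    | succ j ih =>
      intro hj
      have hjt : j ≤ t := Nat.lt_succ_iff.mp hj
      have hsub := ih (hjt.trans (Nat.le_succ t))
      have hτ : (2 + ε) * (1 + ε) ^ j < (coreness G v : ℝ) := by
        have hmono : (1 + ε) ^ j ≤ (1 + ε) ^ t :=
          pow_le_pow_right₀ (by linarith) hjt
        nlinarith
      have hps : phaseSet G ε R (j + 1)
          = (peelStep G ((2 + ε) * (1 + ε) ^ j))^[R] (phaseSet G ε R j) := rfl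
      rw [hps]
      exact subset_peel_iterate G _ _ s hτ hs R _ hsub
  exact h2 (key (t + 1) le_rfl hvs)

lemma shrink_step (ε K : ℝ) (hε : 0 < ε) (k : ℕ) (hkK : (k : ℝ) ≤ K) (hK : 0 < K)
    (S : Finset V)
    (hne : ((peelStep G ((2 + ε) * K) S).filter (fun v => coreness G v ≤ k)).Nonempty) :
    (2 + ε) * (((peelStep G ((2 + ε) * K) S).filter (fun v => coreness G v ≤ k)).card : ℝ)
      < 2 * ((S.filter (fun v => coreness G v ≤ k)).card : ℝ) := by
  set A' := (peelStep G ((2 + ε) * K) S).filter (fun v => coreness G v ≤ k) with hA'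
  set A := S.filter (fun v => coreness G v ≤ k) with hA
  set C := Finset.univ.filter (fun w => k + 1 ≤ coreness G w) with hCdef
  have hA'A : A' ⊆ A := Finset.filter_subset_filter _ (Finset.filter_subset _ _)
  have hpt : ∀ v ∈ A', (2 + ε) * K
      < ((((A.filter (G.Adj v)).card + (C.filter (G.Adj v)).card : ℕ)) : ℝ) := by
    intro v hv
    have hv' := Finset.mem_filter.mp hv
    have hpeel := (mem_peelStep G _ S v).mp hv'.1
    have hsub : S.filter (fun w => G.Adj v w) ⊆ (A.filter (G.Adj v)) ∪ (C.filter (G.Adj v)) := by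
      intro w hw
      have hw' := Finset.mem_filter.mp hw
      by_cases hcw : coreness G w ≤ k
      · exact Finset.mem_union_left _
          (Finset.mem_filter.mpr ⟨Finset.mem_filter.mpr ⟨hw'.1, hcw⟩, hw'.2⟩)
      · exact Finset.mem_union_right _
          (Finset.mem_filter.mpr ⟨Finset.mem_filter.mpr ⟨Finset.mem_univ _, by omega⟩, hw'.2⟩)
    have hsplit : (S.filter (fun w => G.Adj v w)).card
        ≤ (A.filter (G.Adj v)).card + (C.filter (G.Adj v)).card :=
      (Finset.card_le_card hsub).trans (Finset.card_union_le _ _)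
    calc (2 + ε) * K < ((S.filter (fun w => G.Adj v w)).card : ℝ) := hpeel.2
      _ ≤ _ := by exact_mod_cast hsplit
  have hsum : (A'.card : ℝ) * ((2 + ε) * K)
      < ((∑ v ∈ A', ((A.filter (G.Adj v)).card + (C.filter (G.Adj v)).card) : ℕ) : ℝ) := by
    push_cast
    have := Finset.sum_lt_sum_of_nonempty hne hpt
    push_cast at this
    simpa [Finset.sum_const, nsmul_eq_mul] using this
  have hmono1 : ∑ v ∈ A', (A.filter (G.Adj v)).card ≤ ∑ v ∈ A, (A.filter (G.Adj v)).card :=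
    Finset.sum_le_sum_of_subset hA'A
  have hmono2 : ∑ v ∈ A', (C.filter (G.Adj v)).card ≤ ∑ v ∈ A, (C.filter (G.Adj v)).card :=
    Finset.sum_le_sum_of_subset hA'A
  have hkc := keycount G k A (fun v hvA => (Finset.mem_filter.mp hvA).2)
  rw [← hCdef] at hkc
  have hcount : ∑ v ∈ A', ((A.filter (G.Adj v)).card + (C.filter (G.Adj v)).card)
      ≤ 2 * k * A.card := by
    rw [Finset.sum_add_distrib]
    omega
  have hfin : ((2 + ε) * (A'.card : ℝ)) * K < (2 * (A.card : ℝ)) * K := by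
    have h1 : ((∑ v ∈ A', ((A.filter (G.Adj v)).card + (C.filter (G.Adj v)).card) : ℕ) : ℝ)
        ≤ 2 * (k : ℝ) * (A.card : ℝ) := by
      calc ((∑ v ∈ A', ((A.filter (G.Adj v)).card + (C.filter (G.Adj v)).card) : ℕ) : ℝ)
          ≤ ((2 * k * A.card : ℕ) : ℝ) := by exact_mod_cast hcount
        _ = 2 * (k : ℝ) * (A.card : ℝ) := by push_cast; ring
    have h2 : 2 * (k : ℝ) * (A.card : ℝ) ≤ 2 * K * (A.card : ℝ) := by
      have hc : (0 : ℝ) ≤ (A.card : ℝ) := Nat.cast_nonneg _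
      nlinarith
    nlinarith [hsum]
  exact lt_of_mul_lt_mul_right hfin hK.le

lemma coreness_gt_of_survived (ε : ℝ) (hε : 0 < ε) (R : ℕ)
    (hR : R = ⌈Real.logb ((2 + ε) / 2) (Fintype.card V)⌉₊) (hn : 2 ≤ Fintype.card V)
    (u : ℕ) (v : V) (h1 : v ∈ phaseSet G ε R (u + 1)) :
    ((1 + ε) ^ u : ℝ) < (coreness G v : ℝ) := by
  by_contra hcon
  push_neg at hcon
  have hK1 : (1 : ℝ) ≤ (1 + ε) ^ u := one_le_pow₀ (by linarith)
  set K : ℝ := (1 + ε) ^ u with hKdef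
  set k : ℕ := ⌊K⌋₊ with hkdef
  have hkK : (k : ℝ) ≤ K := Nat.floor_le (by linarith)
  have hck : coreness G v ≤ k := Nat.le_floor hcon
  set f := peelStep G ((2 + ε) * K) with hfdef
  set S0 := phaseSet G ε R u with hS0
  have hps : phaseSet G ε R (u + 1) = f^[R] S0 := rfl
  set m : ℕ → ℕ := fun i => ((f^[i] S0).filter (fun w => coreness G w ≤ k)).card with hmdef
  have hvin : ∀ i, i ≤ R → v ∈ (f^[i] S0).filter (fun w => coreness G w ≤ k) := by
    intro i hi
    refine Finset.mem_filter.mpr ⟨?_, hck⟩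
    obtain ⟨d, rfl⟩ := Nat.exists_eq_add_of_le hi
    have hsplit : f^[i + d] S0 = f^[d] (f^[i] S0) := by
      rw [Nat.add_comm, Function.iterate_add_apply]
    rw [hps, hsplit] at h1
    exact iterate_peel_subset G _ d _ h1
  have hstep : ∀ i, i + 1 ≤ R → (2 + ε) * (m (i + 1) : ℝ) < 2 * (m i : ℝ) := by
    intro i hi
    have hiter : f^[i + 1] S0 = f (f^[i] S0) := Function.iterate_succ_apply' f i S0
    have hne : ((f (f^[i] S0)).filter (fun w => coreness G w ≤ k)).Nonempty := by
      refine ⟨v, ?_⟩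
      have hvv := hvin (i + 1) hi
      rwa [hiter] at hvv
    have hss := shrink_step G ε K hε k hkK (by linarith) (f^[i] S0) hne
    simp only [hmdef, hiter]
    exact hss
  have hchain : ∀ i, 1 ≤ i → i ≤ R → ((2 + ε) ^ i) * (m i : ℝ) < (2 ^ i) * (m 0 : ℝ) := by
    intro i
    induction i with
    | zero => exact fun h => absurd h (by omega)
    | succ i ih =>
      intro _ hiR
      rcases Nat.eq_zero_or_pos i with rfl | hi
      · simpa using hstep 0 hiR
      · have h1' := ih hi (by omega)
        have h2' := hstep i hiR
        have hp : (0 : ℝ) < (2 + ε) ^ i := by positivity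
        calc (2 + ε) ^ (i + 1) * (m (i + 1) : ℝ)
            = (2 + ε) ^ i * ((2 + ε) * (m (i + 1) : ℝ)) := by ring
          _ < (2 + ε) ^ i * (2 * (m i : ℝ)) := mul_lt_mul_of_pos_left h2' hp
          _ = 2 * ((2 + ε) ^ i * (m i : ℝ)) := by ring
          _ < 2 * ((2 : ℝ) ^ i * (m 0 : ℝ)) := by linarith
          _ = 2 ^ (i + 1) * (m 0 : ℝ) := by ring
  have hb1 : (1 : ℝ) < (2 + ε) / 2 := by linarith
  have hncast : (1 : ℝ) < (Fintype.card V : ℝ) := by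
    exact_mod_cast one_lt_two.trans_le hn
  have hR1 : 1 ≤ R := by
    rw [hR, Nat.one_le_iff_ne_zero, ← Nat.pos_iff_ne_zero, Nat.ceil_pos]
    exact Real.logb_pos hb1 hncast
  have hnR : (Fintype.card V : ℝ) ≤ ((2 + ε) / 2) ^ R := by
    have hlog : Real.logb ((2 + ε) / 2) (Fintype.card V) ≤ (R : ℝ) := by
      rw [hR]; exact Nat.le_ceil _
    calc (Fintype.card V : ℝ)
        = ((2 + ε) / 2) ^ (Real.logb ((2 + ε) / 2) (Fintype.card V)) :=
          (Real.rpow_logb (by linarith) (by linarith) (by linarith)).symm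
      _ ≤ ((2 + ε) / 2) ^ (R : ℝ) := Real.rpow_le_rpow_of_exponent_le hb1.le hlog
      _ = ((2 + ε) / 2) ^ R := Real.rpow_natCast _ R
  have hmR1 : (1 : ℝ) ≤ (m R : ℝ) := by
    have hc := Finset.card_pos.mpr ⟨v, hvin R le_rfl⟩
    exact_mod_cast hc
  have hm0n : (m 0 : ℝ) ≤ (Fintype.card V : ℝ) := by
    have hc : m 0 ≤ Fintype.card V :=
      (Finset.card_filter_le _ _).trans (Finset.card_le_univ _)
    exact_mod_cast hc
  have hfinal := hchain R hR1 le_rfl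
  have hpow2 : (0 : ℝ) < 2 ^ R := by positivity
  have hpowe : (0 : ℝ) < (2 + ε) ^ R := by positivity
  have hkey : (2 : ℝ) ^ R * ((2 + ε) / 2) ^ R = (2 + ε) ^ R := by
    rw [← mul_pow]; congr 1; ring
  have c1 : (2 + ε) ^ R ≤ (2 + ε) ^ R * (m R : ℝ) := le_mul_of_one_le_right hpowe.le hmR1
  have c2 : (2 : ℝ) ^ R * (m 0 : ℝ) ≤ 2 ^ R * (Fintype.card V : ℝ) := by nlinarith
  have c3 : (2 : ℝ) ^ R * (Fintype.card V : ℝ) ≤ (2 + ε) ^ R := by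
    calc (2 : ℝ) ^ R * (Fintype.card V : ℝ) ≤ 2 ^ R * ((2 + ε) / 2) ^ R := by nlinarith
      _ = (2 + ε) ^ R := hkey
  linarith

lemma peelStep_eq_empty (τ : ℝ) (S : Finset V) (hτ : (Fintype.card V : ℝ) ≤ τ) :
    peelStep G τ S = ∅ := by
  rw [Finset.eq_empty_iff_forall_notMem]
  intro x hx
  have hm := ((mem_peelStep G τ S x).mp hx).2
  have hcard : ((S.filter (fun w => G.Adj x w)).card : ℝ) ≤ (Fintype.card V : ℝ) := by
    exact_mod_cast (Finset.card_filter_le _ _).trans (Finset.card_le_univ _)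
  linarith

lemma eventually_removed (ε : ℝ) (hε : 0 < ε) (R : ℕ) (hR1 : 1 ≤ R) (v : V) :
    ∃ t, v ∈ phaseSet G ε R t ∧ v ∉ phaseSet G ε R (t + 1) := by
  obtain ⟨t0, ht0⟩ := pow_unbounded_of_one_lt (Fintype.card V : ℝ)
    (by linarith : (1 : ℝ) < 1 + ε)
  have hτ : (Fintype.card V : ℝ) ≤ (2 + ε) * (1 + ε) ^ t0 := by
    have hp : (0 : ℝ) < (1 + ε) ^ t0 := by positivity
    nlinarith
  have hempty : phaseSet G ε R (t0 + 1) = ∅ := by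
    have hps : phaseSet G ε R (t0 + 1)
        = (peelStep G ((2 + ε) * (1 + ε) ^ t0))^[R] (phaseSet G ε R t0) := rfl
    obtain ⟨r, rfl⟩ : ∃ r, R = r + 1 := ⟨R - 1, by omega⟩
    rw [hps, Function.iterate_succ_apply, peelStep_eq_empty G _ _ hτ]
    exact Function.iterate_fixed (peelStep_eq_empty G _ _ hτ) r
  have hdesc : ∀ t, v ∉ phaseSet G ε R t →
      ∃ j, v ∈ phaseSet G ε R j ∧ v ∉ phaseSet G ε R (j + 1) := by
    intro t
    induction t with
    | zero =>
      intro h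
      exact absurd (show v ∈ phaseSet G ε R 0 from Finset.mem_univ v) h
    | succ t ih =>
      intro h
      by_cases hv : v ∈ phaseSet G ε R t
      · exact ⟨t, hv, h⟩
      · exact ih hv
  exact hdesc (t0 + 1) (by rw [hempty]; exact Finset.notMem_empty v)

end Aux

/-- In the phased peeling process with `R = ⌈log_{(2+ε)/2}(n)⌉` rounds per
phase and threshold `(2+ε)(1+ε)^t` in phase `t`: every vertex removed during phase `t` has
coreness at most `(2+ε)(1+ε)^t`; for `t ≥ 1` it has coreness strictly greater than
`(1+ε)^{t-1}`; every vertex is removed in some phase; and for every vertex of coreness at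
least `1` the estimate `ĉ(v) = (1+ε)^{max(t-1,0)}` (where `v` is removed in phase `t`)
satisfies `ĉ(v) ≤ k(v) ≤ (2+ε)(1+ε)²·ĉ(v)`. -/
theorem phased_peeling_coreness_estimate
    {V : Type} [Fintype V] [DecidableEq V] (G : SimpleGraph V) [DecidableRel G.Adj]
    (hn : 2 ≤ Fintype.card V) (ε : ℝ) (hε : 0 < ε)
    (R : ℕ) (hR : R = ⌈Real.logb ((2 + ε) / 2) (Fintype.card V)⌉₊) :
    (∀ (t : ℕ) (v : V), v ∈ phaseSet G ε R t → v ∉ phaseSet G ε R (t + 1) →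
        (coreness G v : ℝ) ≤ (2 + ε) * (1 + ε) ^ t) ∧
    (∀ (t : ℕ) (v : V), 1 ≤ t → v ∈ phaseSet G ε R t → v ∉ phaseSet G ε R (t + 1) →
        (1 + ε) ^ (t - 1) < (coreness G v : ℝ)) ∧
    (∀ v : V, ∃ t : ℕ, v ∈ phaseSet G ε R t ∧ v ∉ phaseSet G ε R (t + 1)) ∧
    (∀ (t : ℕ) (v : V), v ∈ phaseSet G ε R t → v ∉ phaseSet G ε R (t + 1) →
        1 ≤ coreness G v →
        (1 + ε) ^ (t - 1) ≤ (coreness G v : ℝ) ∧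
        (coreness G v : ℝ) ≤ (2 + ε) * (1 + ε) ^ 2 * (1 + ε) ^ (t - 1)) := by
  have hb1 : (1 : ℝ) < (2 + ε) / 2 := by linarith
  have hncast : (1 : ℝ) < (Fintype.card V : ℝ) := by
    exact_mod_cast one_lt_two.trans_le hn
  have hR1 : 1 ≤ R := by
    rw [hR, Nat.one_le_iff_ne_zero, ← Nat.pos_iff_ne_zero, Nat.ceil_pos]
    exact Real.logb_pos hb1 hncast
  have hclaim2 : ∀ (t : ℕ) (v : V), 1 ≤ t → v ∈ phaseSet G ε R t →
      ((1 + ε) ^ (t - 1) : ℝ) < (coreness G v : ℝ) := by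
    intro t v ht h1
    obtain ⟨u, rfl⟩ : ∃ u, t = u + 1 := ⟨t - 1, by omega⟩
    simpa using coreness_gt_of_survived G ε hε R hR hn u v h1
  refine ⟨fun t v _ h2 => coreness_le_of_removed G ε hε R t v h2,
    fun t v ht h1 _ => hclaim2 t v ht h1,
    eventually_removed G ε hε R hR1,
    ?_⟩
  intro t v h1 h2 hc
  have hub := coreness_le_of_removed G ε hε R t v h2
  constructor
  · rcases Nat.eq_zero_or_pos t with rfl | ht
    · simpa using (show (1 : ℝ) ≤ (coreness G v : ℝ) by exact_mod_cast hc)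
    · exact (hclaim2 t v ht h1).le
  · rcases Nat.eq_zero_or_pos t with rfl | ht
    · simp only [Nat.zero_sub, pow_zero, mul_one]
      norm_num at hub
      nlinarith
    · have hts : t - 1 + 1 = t := by omega
      have hpow : (1 + ε) ^ t = (1 + ε) ^ (t - 1) * (1 + ε) := by
        rw [← pow_succ, hts]
      rw [hpow] at hub
      have hp : (0 : ℝ) < (1 + ε) ^ (t - 1) := by positivity
      nlinarith [mul_pos (mul_pos (show (0 : ℝ) < (2 + ε) * (1 + ε) by nlinarith) hp) hε]
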